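/- arXiv:2603.07809 — 2 statements merged into one kernel-verified Lean document; each statement's English description precedes it below -/
import Mathlib

section
/- Let G_1 and G_2 be finite simple graphs on the same vertically ordered vertex set, and suppose some vertex v satisfies ldeg_{G_1}(v) ≠ ldeg_{G_2}(v) or hdeg_{G_1}(v) ≠ hdeg_{G_2}(v). Then G_1 and G_2 do not have the same VPHT (their verbose diagrams differ in the up or down direction). -/
/-! Common definitions: vertical (multi)graphs on `Fin n` (vertices ordered by height,
vertex `v` at height `(v : ℕ)`), edges stored as pairs `(lower, upper)`. -/

/-- Number of edges of `E` from `v` to strictly lower vertices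
(i.e. edges whose upper endpoint is `v`), with multiplicity. -/
def ldeg {n : ℕ} (E : Multiset (Fin n × Fin n)) (v : Fin n) : ℕ :=
  (E.filter (fun e => e.2 = v)).card

/-- Number of edges of `E` from `v` to strictly higher vertices
(i.e. edges whose lower endpoint is `v`), with multiplicity. -/
def hdeg {n : ℕ} (E : Multiset (Fin n × Fin n)) (v : Fin n) : ℕ :=
  (E.filter (fun e => e.1 = v)).card

/-- An alternating cycle: a closed walk `w 0, w 1, …, w (2m) = w 0` whose edges
alternately go up and down (odd-indexed vertices are above both cyclic neighbours). -/
structure AltCycle (n : ℕ) where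
  m : ℕ
  pos : 0 < m
  w : ℕ → Fin n
  closed : w (2 * m) = w 0
  up : ∀ j < m, w (2 * j) < w (2 * j + 1)
  down : ∀ j < m, w (2 * j + 2) < w (2 * j + 1)

/-- The up-edges of an alternating cycle (as `(lower, upper)` pairs). -/
def AltCycle.upEdges {n : ℕ} (C : AltCycle n) : Multiset (Fin n × Fin n) :=
  (Multiset.range C.m).map (fun j => (C.w (2 * j), C.w (2 * j + 1)))

/-- The down-edges of an alternating cycle (as `(lower, upper)` pairs). -/
def AltCycle.downEdges {n : ℕ} (C : AltCycle n) : Multiset (Fin n × Fin n) :=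
  (Multiset.range C.m).map (fun j => (C.w (2 * j + 2), C.w (2 * j + 1)))

/-- All edges of an alternating cycle. -/
def AltCycle.edges {n : ℕ} (C : AltCycle n) : Multiset (Fin n × Fin n) :=
  C.upEdges + C.downEdges

/-- The edge multiset `E` can be partitioned into alternating cycles. -/
def AltPartition {n : ℕ} (E : Multiset (Fin n × Fin n)) : Prop :=
  ∃ (k : ℕ) (Cs : Fin k → AltCycle n), E = ∑ i, (Cs i).edges

/-- The undirected edge between `a` and `b`, stored as a `(lower, upper)` pair. -/
def stepEdge {n : ℕ} (a b : Fin n) : Fin n × Fin n := if a < b then (a, b) else (b, a)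

/-- `E` contains a (vertex-simple) cycle: a closed walk with pairwise distinct vertices
whose (undirected) edge multiset is contained in `E`. -/
def HasCycle {n : ℕ} (E : Multiset (Fin n × Fin n)) : Prop :=
  ∃ (len : ℕ) (w : ℕ → Fin n), 0 < len ∧ w len = w 0 ∧
    (∀ i < len, ∀ j < len, w i = w j → i = j) ∧
    ((Multiset.range len).map (fun j => stepEdge (w j) (w (j + 1)))) ≤ E

/-- Reachability (connectivity) in the multigraph with edge multiset `E`. -/
def Reach {n : ℕ} (E : Multiset (Fin n × Fin n)) (a b : Fin n) : Prop :=
  Relation.ReflTransGen (fun x y => (x, y) ∈ E ∨ (y, x) ∈ E) a b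

/-- The connected component of `v` in `E` is a single vertex or a path along
vertices of strictly increasing height. -/
def IncPathComp {n : ℕ} (E : Multiset (Fin n × Fin n)) (v : Fin n) : Prop :=
  ∃ (m : ℕ) (p : Fin (m + 1) → Fin n), StrictMono p ∧
    (∀ u, Reach E v u ↔ ∃ i, p i = u) ∧
    (∀ i : Fin m, (p i.castSucc, p i.succ) ∈ E)

/-- The edges present at stage `j` of the upward lower-star filtration:
those whose upper endpoint has height at most `j`. -/
def levelEdges {n : ℕ} (E : Multiset (Fin n × Fin n)) (j : ℕ) : Multiset (Fin n × Fin n) :=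
  E.filter (fun e => (e.2 : ℕ) ≤ j)

/-- Death time (elder rule) of the 0-dimensional class created by vertex `v` in the
upward lower-star filtration: the first height at which `v` gets connected to a
strictly lower (older) vertex, or `∞` if this never happens. -/
noncomputable def death0 {n : ℕ} (E : Multiset (Fin n × Fin n)) (v : Fin n) : ℕ∞ :=
  sInf ((fun j : ℕ => (j : ℕ∞)) '' {j : ℕ | ∃ u, u < v ∧ Reach (levelEdges E j) u v})

/-- The 0-dimensional verbose persistence diagram in the up direction: one point
per vertex, born at the height of the vertex. -/
noncomputable def diag0 {n : ℕ} (E : Multiset (Fin n × Fin n)) : Multiset (ℕ × ℕ∞) :=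
  (Finset.univ.val : Multiset (Fin n)).map (fun v : Fin n => ((v : ℕ), death0 E v))

/-- Number of edges entering at height `j` (upper endpoint of height `j`). -/
def edgesAt {n : ℕ} (E : Multiset (Fin n × Fin n)) (j : ℕ) : ℕ :=
  (E.filter (fun e => (e.2 : ℕ) = j)).card

/-- Number of 0-dimensional points dying at height `j` in the verbose diagram. -/
noncomputable def deaths0At {n : ℕ} (E : Multiset (Fin n × Fin n)) (j : ℕ) : ℕ :=
  Nat.card {v : Fin n // death0 E v = (j : ℕ∞)}

/-- Number of 1-dimensional classes born at height `j`: edges entering at height `j`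
that are creators rather than destructors. -/
noncomputable def cyclesBornAt {n : ℕ} (E : Multiset (Fin n × Fin n)) (j : ℕ) : ℕ :=
  edgesAt E j - deaths0At E j

/-- The graph with the vertical order reversed (for the down direction). -/
def flipE {n : ℕ} (E : Multiset (Fin n × Fin n)) : Multiset (Fin n × Fin n) :=
  E.map (fun e => (e.2.rev, e.1.rev))

/-- Equality of the verbose persistence diagrams in the up direction. -/
def UpDiagEq {n : ℕ} (E1 E2 : Multiset (Fin n × Fin n)) : Prop :=
  diag0 E1 = diag0 E2 ∧ ∀ j, cyclesBornAt E1 j = cyclesBornAt E2 j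

/-- Equality of VPHTs for vertical graphs: the verbose diagrams agree in both the
up and the down direction. -/
def VPHTEq {n : ℕ} (E1 E2 : Multiset (Fin n × Fin n)) : Prop :=
  UpDiagEq E1 E2 ∧ UpDiagEq (flipE E1) (flipE E2)

/-- Number of connected components of the multigraph with edge multiset `E`. -/
noncomputable def numComponents {n : ℕ} (E : Multiset (Fin n × Fin n)) : ℕ :=
  Nat.card (Quot (Reach E))

/-- The edge multiset `E` can be partitioned into cycles (closed trails). -/
def CircuitPartition {n : ℕ} (E : Multiset (Fin n × Fin n)) : Prop :=
  ∃ (k : ℕ) (len : Fin k → ℕ) (w : Fin k → ℕ → Fin n),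
    (∀ i, 0 < len i) ∧ (∀ i, w i (len i) = w i 0) ∧
    (∀ i, ∀ j < len i, w i j ≠ w i (j + 1)) ∧
    (∑ i, (Multiset.range (len i)).map (fun j => stepEdge (w i j) (w i (j + 1)))) = E
/-! ### Auxiliary machinery for Statement 8 -/

section Aux

attribute [local instance] Classical.propDecidable

variable {n : ℕ}

lemma reach_mono {E F : Multiset (Fin n × Fin n)} (h : E ≤ F) {a b : Fin n}
    (hr : Reach E a b) : Reach F a b :=
  by
    unfold Reach at hr ⊢
    induction hr with
    | refl => exact Relation.ReflTransGen.refl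
    | tail _ hxy ih =>
      exact ih.tail (hxy.imp (Multiset.mem_of_le h) (Multiset.mem_of_le h))

lemma reach_symm {E : Multiset (Fin n × Fin n)} {a b : Fin n} (h : Reach E a b) :
    Reach E b a :=
  by
    unfold Reach at h ⊢
    induction h with
    | refl => exact Relation.ReflTransGen.refl
    | tail _ hbc ih => exact Relation.ReflTransGen.head hbc.symm ih

/-- Decomposing reachability after adding an edge. -/
lemma reach_cons {e : Fin n × Fin n} {E : Multiset (Fin n × Fin n)} {a b : Fin n}
    (h : Reach (e ::ₘ E) a b) :
    Reach E a b ∨ (Reach E a e.1 ∧ Reach E e.2 b) ∨ (Reach E a e.2 ∧ Reach E e.1 b) := by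
  obtain ⟨e1, e2⟩ := e
  induction h with
  | refl => exact Or.inl Relation.ReflTransGen.refl
  | @tail c d hac hcd ih =>
    rcases hcd with h1 | h1
    · rcases Multiset.mem_cons.mp h1 with he | hE
      · injection he with hc hd
        subst hc; subst hd
        rcases ih with ih | ⟨iha, _⟩ | ⟨iha, _⟩
        · exact Or.inr (Or.inl ⟨ih, Relation.ReflTransGen.refl⟩)
        · exact Or.inr (Or.inl ⟨iha, Relation.ReflTransGen.refl⟩)
        · exact Or.inl iha
      · have hstep : Reach E c d := Relation.ReflTransGen.single (Or.inl hE)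
        rcases ih with ih | ⟨iha, ihb⟩ | ⟨iha, ihb⟩
        · exact Or.inl (ih.trans hstep)
        · exact Or.inr (Or.inl ⟨iha, ihb.trans hstep⟩)
        · exact Or.inr (Or.inr ⟨iha, ihb.trans hstep⟩)
    · rcases Multiset.mem_cons.mp h1 with he | hE
      · injection he with hd hc
        subst hc; subst hd
        rcases ih with ih | ⟨iha, _⟩ | ⟨iha, _⟩
        · exact Or.inr (Or.inr ⟨ih, Relation.ReflTransGen.refl⟩)
        · exact Or.inl iha
        · exact Or.inr (Or.inr ⟨iha, Relation.ReflTransGen.refl⟩)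
      · have hstep : Reach E c d := Relation.ReflTransGen.single (Or.inr hE)
        rcases ih with ih | ⟨iha, ihb⟩ | ⟨iha, ihb⟩
        · exact Or.inl (ih.trans hstep)
        · exact Or.inr (Or.inl ⟨iha, ihb.trans hstep⟩)
        · exact Or.inr (Or.inr ⟨iha, ihb.trans hstep⟩)

/-- The set of vertices that are minima of their connected components. -/
noncomputable def mins (E : Multiset (Fin n × Fin n)) : Finset (Fin n) :=
  Finset.univ.filter (fun v => ∀ u, u < v → ¬ Reach E u v)

lemma mins_anti {E F : Multiset (Fin n × Fin n)} (h : E ≤ F) : mins F ⊆ mins E := by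
  intro v hv
  simp only [mins, Finset.mem_filter, Finset.mem_univ, true_and] at hv ⊢
  exact fun u hu hr => hv u hu (reach_mono h hr)

lemma mins_unique {E : Multiset (Fin n × Fin n)} {v v' x : Fin n}
    (hv : v ∈ mins E) (hv' : v' ∈ mins E) (h1 : Reach E x v) (h2 : Reach E x v') :
    v = v' := by
  simp only [mins, Finset.mem_filter, Finset.mem_univ, true_and] at hv hv'
  have hvv' : Reach E v v' := (reach_symm h1).trans h2
  have h3 : ¬ v < v' := fun hlt => hv' v hlt hvv'
  have h4 : ¬ v' < v := fun hlt => hv v' hlt (reach_symm hvv')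
  exact le_antisymm (not_lt.mp h4) (not_lt.mp h3)

lemma lost_classify {e : Fin n × Fin n} {E : Multiset (Fin n × Fin n)} {v : Fin n}
    (hv : v ∈ mins E) (hv' : v ∉ mins (e ::ₘ E)) :
    ∃ u, u < v ∧ ((Reach E u e.1 ∧ Reach E e.2 v) ∨ (Reach E u e.2 ∧ Reach E e.1 v)) := by
  simp only [mins, Finset.mem_filter, Finset.mem_univ, true_and] at hv hv'
  push_neg at hv'
  obtain ⟨u, hu, hr⟩ := hv'
  refine ⟨u, hu, ?_⟩
  rcases reach_cons hr with h | h | h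
  · exact absurd h (hv u hu)
  · exact Or.inl h
  · exact Or.inr h

lemma card_mins_cons (e : Fin n × Fin n) (E : Multiset (Fin n × Fin n)) :
    (mins E).card ≤ (mins (e ::ₘ E)).card + 1 := by
  have hsub : mins (e ::ₘ E) ⊆ mins E := mins_anti (Multiset.le_cons_self E e)
  have hD : ((mins E) \ (mins (e ::ₘ E))).card ≤ 1 := by
    apply Finset.card_le_one.mpr
    intro v hvD v' hv'D
    obtain ⟨hv, hvlost⟩ := Finset.mem_sdiff.mp hvD
    obtain ⟨hv', hv'lost⟩ := Finset.mem_sdiff.mp hv'D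
    obtain ⟨u, hu, hc⟩ := lost_classify hv hvlost
    obtain ⟨u', hu', hc'⟩ := lost_classify hv' hv'lost
    rcases hc with ⟨hue1, he2v⟩ | ⟨hue2, he1v⟩ <;>
      rcases hc' with ⟨hu'e1, he2v'⟩ | ⟨hu'e2, he1v'⟩
    · exact mins_unique hv hv' he2v he2v'
    · -- Reach u e.1, Reach e.2 v ; Reach u' e.2, Reach e.1 v'
      exfalso
      have r1 : Reach E u v' := hue1.trans he1v'
      have r2 : Reach E u' v := hu'e2.trans he2v
      simp only [mins, Finset.mem_filter, Finset.mem_univ, true_and] at hv hv'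
      have h3 : ¬ u < v' := fun hlt => hv' u hlt r1
      have h4 : ¬ u' < v := fun hlt => hv u' hlt r2
      have c1 : v' < v := lt_of_le_of_lt (not_lt.mp h3) hu
      have c2 : v < v' := lt_of_le_of_lt (not_lt.mp h4) hu'
      exact lt_asymm c1 c2
    · exfalso
      have r1 : Reach E u v' := hue2.trans he2v'
      have r2 : Reach E u' v := hu'e1.trans he1v
      simp only [mins, Finset.mem_filter, Finset.mem_univ, true_and] at hv hv'
      have h3 : ¬ u < v' := fun hlt => hv' u hlt r1
      have h4 : ¬ u' < v := fun hlt => hv u' hlt r2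
      have c1 : v' < v := lt_of_le_of_lt (not_lt.mp h3) hu
      have c2 : v < v' := lt_of_le_of_lt (not_lt.mp h4) hu'
      exact lt_asymm c1 c2
    · exact mins_unique hv hv' he1v he1v'
  calc (mins E).card ≤ ((mins (e ::ₘ E)) ∪ ((mins E) \ (mins (e ::ₘ E)))).card := by
        apply Finset.card_le_card
        intro v hv
        by_cases h : v ∈ mins (e ::ₘ E)
        · exact Finset.mem_union_left _ h
        · exact Finset.mem_union_right _ (Finset.mem_sdiff.mpr ⟨hv, h⟩)
    _ ≤ (mins (e ::ₘ E)).card + ((mins E) \ (mins (e ::ₘ E))).card := Finset.card_union_le _ _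
    _ ≤ (mins (e ::ₘ E)).card + 1 := by omega

lemma card_mins_add (E F : Multiset (Fin n × Fin n)) :
    (mins E).card ≤ (mins (E + F)).card + Multiset.card F := by
  induction F using Multiset.induction with
  | empty => simp
  | cons e F ih =>
    have h1 : E + (e ::ₘ F) = e ::ₘ (E + F) := by
      rw [Multiset.add_cons]
    calc (mins E).card ≤ (mins (E + F)).card + Multiset.card F := ih
      _ ≤ ((mins (e ::ₘ (E + F))).card + 1) + Multiset.card F :=
          by have := card_mins_cons e (E + F); omega
      _ = (mins (E + (e ::ₘ F))).card + Multiset.card (e ::ₘ F) := by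
          rw [h1, Multiset.card_cons]; ring

/-- The "already merged into something lower" predicate at stage `j`. -/
def Pl (E : Multiset (Fin n × Fin n)) (j : ℕ) (v : Fin n) : Prop :=
  ∃ u, u < v ∧ Reach (levelEdges E j) u v

lemma levelEdges_mono (E : Multiset (Fin n × Fin n)) {i j : ℕ} (h : i ≤ j) :
    levelEdges E i ≤ levelEdges E j := by
  apply Multiset.monotone_filter_right
  intro e he
  exact le_trans (by exact_mod_cast he) (by exact_mod_cast h)

lemma Pl_mono {E : Multiset (Fin n × Fin n)} {i j : ℕ} (h : i ≤ j) {v : Fin n}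
    (hp : Pl E i v) : Pl E j v := by
  obtain ⟨u, hu, hr⟩ := hp
  exact ⟨u, hu, reach_mono (levelEdges_mono E h) hr⟩

lemma death0_eq_coe_iff {E : Multiset (Fin n × Fin n)} {v : Fin n} {j : ℕ} :
    death0 E v = (j : ℕ∞) ↔ Pl E j v ∧ ∀ i < j, ¬ Pl E i v := by
  have key : ∀ k : ℕ, (Pl E k v ∧ ∀ i < k, ¬ Pl E i v) → death0 E v = (k : ℕ∞) := by
    intro k ⟨hk, hmin⟩
    apply le_antisymm
    · exact sInf_le ⟨k, hk, rfl⟩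
    · apply le_sInf
      rintro x ⟨i, hi, rfl⟩
      by_contra hlt
      push_neg at hlt
      have : i < k := by exact_mod_cast hlt
      exact hmin i this hi
  constructor
  · intro h
    by_cases hS : {i : ℕ | Pl E i v}.Nonempty
    · have hmem := Nat.sInf_mem hS
      have h2 : death0 E v = ((sInf {i : ℕ | Pl E i v} : ℕ) : ℕ∞) :=
        key _ ⟨hmem, fun i hi => Nat.notMem_of_lt_sInf hi⟩
      rw [h] at h2
      have hj : j = sInf {i : ℕ | Pl E i v} := by exact_mod_cast h2
      subst hj
      exact ⟨hmem, fun i hi => Nat.notMem_of_lt_sInf hi⟩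
    · exfalso
      have : {i : ℕ | Pl E i v} = ∅ := Set.not_nonempty_iff_eq_empty.mp hS
      have h0 : death0 E v = ⊤ := by
        unfold death0
        rw [show {j : ℕ | ∃ u, u < v ∧ Reach (levelEdges E j) u v} = (∅ : Set ℕ) from this]
        simp
      rw [h0] at h
      exact (ENat.coe_ne_top j) h.symm
  · exact key j

lemma mem_mins_iff {E : Multiset (Fin n × Fin n)} {j : ℕ} {v : Fin n} :
    v ∈ mins (levelEdges E j) ↔ ¬ Pl E j v := by
  simp only [mins, Finset.mem_filter, Finset.mem_univ, true_and, Pl, not_exists, not_and]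

lemma deaths0At_le_card {E : Multiset (Fin n × Fin n)} {j : ℕ} {s : Finset (Fin n)}
    (h : ∀ v, death0 E v = (j : ℕ∞) → v ∈ s) : deaths0At E j ≤ s.card := by
  have hinj : Function.Injective
      (fun x : {v : Fin n // death0 E v = (j : ℕ∞)} =>
        (⟨x.1, h x.1 x.2⟩ : {y // y ∈ s})) := by
    intro a b hab
    simp only [Subtype.mk.injEq] at hab
    exact Subtype.ext hab
  unfold deaths0At
  calc Nat.card {v : Fin n // death0 E v = (j : ℕ∞)}
      ≤ Nat.card {y // y ∈ s} := Nat.card_le_card_of_injective _ hinj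
    _ = s.card := by rw [Nat.card_eq_fintype_card, Fintype.card_coe]

lemma levelEdges_split (E : Multiset (Fin n × Fin n)) (j : ℕ) :
    levelEdges E (j + 1) = levelEdges E j + E.filter (fun e => ((e.2 : ℕ) = j + 1)) := by
  unfold levelEdges
  rw [Multiset.filter_add_filter]
  have h1 : Multiset.filter (fun e : Fin n × Fin n => (e.2 : ℕ) ≤ j ∨ (e.2 : ℕ) = j + 1) E
      = Multiset.filter (fun e => (e.2 : ℕ) ≤ j + 1) E := by
    apply Multiset.filter_congr
    intro e _
    constructor
    · rintro (h | h) <;> omega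
    · intro h
      omega
  have h2 : Multiset.filter (fun e : Fin n × Fin n => (e.2 : ℕ) ≤ j ∧ (e.2 : ℕ) = j + 1) E
      = 0 := by
    rw [Multiset.filter_eq_nil]
    intro e _ ⟨ha, hb⟩
    omega
  rw [h1, h2, add_zero]

lemma mins_zero_multiset : mins (0 : Multiset (Fin n × Fin n)) = Finset.univ := by
  apply Finset.eq_univ_of_forall
  intro v
  simp only [mins, Finset.mem_filter, Finset.mem_univ, true_and]
  intro u hu hr
  have : u = v := by
    induction hr with
    | refl => rfl
    | tail _ hstep _ => simp at hstep
  omega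

lemma card_levelEdges_zero (E : Multiset (Fin n × Fin n)) :
    Multiset.card (levelEdges E 0) = edgesAt E 0 := by
  unfold levelEdges edgesAt
  congr 1
  apply Multiset.filter_congr
  intro e _
  simp [Nat.le_zero]

/-- Key inequality: the number of deaths at height `j` is at most the number of
edges entering at height `j`. -/
lemma deaths0At_le_edgesAt (E : Multiset (Fin n × Fin n)) (j : ℕ) :
    deaths0At E j ≤ edgesAt E j := by
  cases j with
  | zero =>
    have hcard : deaths0At E 0 ≤ (Finset.univ \ mins (levelEdges E 0)).card := by
      apply deaths0At_le_card
      intro v hv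
      rw [death0_eq_coe_iff] at hv
      rw [Finset.mem_sdiff, mem_mins_iff]
      exact ⟨Finset.mem_univ v, not_not.mpr hv.1⟩
    rw [Finset.card_sdiff_of_subset (Finset.subset_univ _)] at hcard
    have hm := card_mins_add (0 : Multiset (Fin n × Fin n)) (levelEdges E 0)
    rw [zero_add, mins_zero_multiset, card_levelEdges_zero] at hm
    have hc : (Finset.univ : Finset (Fin n)).card = n := by
      rw [Finset.card_univ, Fintype.card_fin]
    omega
  | succ j =>
    have hBA : mins (levelEdges E (j + 1)) ⊆ mins (levelEdges E j) :=
      mins_anti (levelEdges_mono E (Nat.le_succ j))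
    have hcard : deaths0At E (j + 1)
        ≤ (mins (levelEdges E j) \ mins (levelEdges E (j + 1))).card := by
      apply deaths0At_le_card
      intro v hv
      rw [death0_eq_coe_iff] at hv
      obtain ⟨hp, hmin⟩ := hv
      rw [Finset.mem_sdiff, mem_mins_iff, mem_mins_iff]
      exact ⟨hmin j (Nat.lt_succ_self j), not_not.mpr hp⟩
    rw [Finset.card_sdiff_of_subset hBA] at hcard
    have hm := card_mins_add (levelEdges E j) (E.filter (fun e => ((e.2 : ℕ) = j + 1)))
    rw [← levelEdges_split] at hm
    have hce : Multiset.card (E.filter (fun e => ((e.2 : ℕ) = j + 1))) = edgesAt E (j + 1) :=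
      rfl
    rw [hce] at hm
    omega

lemma death0_eq_of_diag0_eq {E1 E2 : Multiset (Fin n × Fin n)} (h : diag0 E1 = diag0 E2)
    (v : Fin n) : death0 E1 v = death0 E2 v := by
  have hmem : ((v : ℕ), death0 E1 v) ∈ diag0 E1 := by
    unfold diag0
    exact Multiset.mem_map.mpr ⟨v, Finset.mem_univ_val v, rfl⟩
  rw [h] at hmem
  unfold diag0 at hmem
  obtain ⟨u, _, hu⟩ := Multiset.mem_map.mp hmem
  have h1 : (u : ℕ) = (v : ℕ) := congrArg Prod.fst hu
  have h2 : death0 E2 u = death0 E1 v := congrArg Prod.snd hu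
  rw [show u = v from Fin.val_injective h1] at h2
  exact h2.symm

lemma edgesAt_eq_of_upDiagEq {E1 E2 : Multiset (Fin n × Fin n)} (h : UpDiagEq E1 E2)
    (j : ℕ) : edgesAt E1 j = edgesAt E2 j := by
  obtain ⟨hdiag, hcyc⟩ := h
  have hdeath : deaths0At E1 j = deaths0At E2 j := by
    have hfun : death0 E1 = death0 E2 := funext (death0_eq_of_diag0_eq hdiag)
    unfold deaths0At
    rw [hfun]
  have h1 := deaths0At_le_edgesAt E1 j
  have h2 := deaths0At_le_edgesAt E2 j
  have hc := hcyc j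
  unfold cyclesBornAt at hc
  omega

lemma ldeg_eq_edgesAt (E : Multiset (Fin n × Fin n)) (v : Fin n) :
    ldeg E v = edgesAt E (v : ℕ) := by
  unfold ldeg edgesAt
  congr 1
  apply Multiset.filter_congr
  intro e _
  simp [Fin.ext_iff]

lemma hdeg_eq_edgesAt_flip (E : Multiset (Fin n × Fin n)) (v : Fin n) :
    hdeg E v = edgesAt (flipE E) ((v.rev : ℕ)) := by
  unfold hdeg edgesAt flipE
  rw [Multiset.filter_map, Multiset.card_map]
  congr 1
  apply Multiset.filter_congr
  intro e _
  simp only [Function.comp_apply, eq_iff_iff]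
  constructor
  · rintro rfl; rfl
  · intro h
    have : e.1.rev = v.rev := Fin.val_injective h
    exact Fin.rev_injective this

end Aux

/-- If some vertex has different `ldeg` or different `hdeg` in two
vertical graphs on the same vertex set, then the graphs do not have the same VPHT
(their verbose diagrams differ in the up or down direction). -/
theorem deg_ne_implies_VPHT_ne {n : ℕ} (E1 E2 : Finset (Fin n × Fin n))
    (h1 : ∀ e ∈ E1, e.1 < e.2) (h2 : ∀ e ∈ E2, e.1 < e.2)
    (hv : ∃ v : Fin n, ldeg E1.val v ≠ ldeg E2.val v ∨ hdeg E1.val v ≠ hdeg E2.val v) :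
    ¬ VPHTEq E1.val E2.val := by
  rintro ⟨hup, hdown⟩
  obtain ⟨v, hv | hv⟩ := hv
  · exact hv (by rw [ldeg_eq_edgesAt, ldeg_eq_edgesAt, edgesAt_eq_of_upDiagEq hup])
  · exact hv (by
      rw [hdeg_eq_edgesAt_flip, hdeg_eq_edgesAt_flip, edgesAt_eq_of_upDiagEq hdown])
end

section
/- Let G_1 and G_2 be finite simple graphs on the same vertically ordered vertex set such that for every vertex v, ldeg_{G_1}(v) = ldeg_{G_2}(v) and hdeg_{G_1}(v) = hdeg_{G_2}(v). Then the multigraph G = G_1 ⊔ G_2 (disjoint union of edge sets over the common vertex set) has the property that every vertex has even ldeg_G and even hdeg_G, and hence its edge set can be partitioned into alternating cycles; i.e., (G_1, G_2) is a colliding pair. -/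
/-! All degrees of `G₁ ⊔ G₂` are even because `G₁` and `G₂` have the same `ldeg` and `hdeg`.
An edge multiset whose `ldeg` and `hdeg` are even everywhere splits into alternating cycles
greedily. If `hdeg E + [a] + [c]` is even at every vertex and `a ≠ c`, then `hdeg E a` is odd,
so some edge goes up from `a` to some `b`; since `ldeg E b` is even, a second edge comes back
down to some `d`, and removing the two edges leaves the same situation for `d` and `c`. By
strong induction `E` is an alternating walk from `a` to `c` plus alternating cycles. For
`a = c` and `E ≠ 0` the same two steps, followed by the walk back, close up into a cycle. -/

theorem Multiset.map_range_succ {α : Type*} (f : ℕ → α) (m : ℕ) :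
    (range (m + 1)).map f = f 0 ::ₘ (range m).map (fun j => f (j + 1)) := by
  simp [range, List.range_succ_eq_map, Function.comp_def]

section AltWalks

variable {n : ℕ}

theorem ldeg_add (s t : Multiset (Fin n × Fin n)) (v : Fin n) :
    ldeg (s + t) v = ldeg s v + ldeg t v := by
  simp only [ldeg, Multiset.filter_add, Multiset.card_add]

theorem hdeg_add (s t : Multiset (Fin n × Fin n)) (v : Fin n) :
    hdeg (s + t) v = hdeg s v + hdeg t v := by
  simp only [hdeg, Multiset.filter_add, Multiset.card_add]

theorem ldeg_cons (e : Fin n × Fin n) (s : Multiset (Fin n × Fin n)) (v : Fin n) :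
    ldeg (e ::ₘ s) v = ldeg s v + if e.2 = v then 1 else 0 := by
  simp only [ldeg, Multiset.filter_cons]
  split_ifs <;> simp

theorem hdeg_cons (e : Fin n × Fin n) (s : Multiset (Fin n × Fin n)) (v : Fin n) :
    hdeg (e ::ₘ s) v = hdeg s v + if e.1 = v then 1 else 0 := by
  simp only [hdeg, Multiset.filter_cons]
  split_ifs <;> simp

theorem ldeg_ne_zero_iff {E : Multiset (Fin n × Fin n)} {b : Fin n} :
    ldeg E b ≠ 0 ↔ ∃ a, (a, b) ∈ E := by
  simp [ldeg]

theorem hdeg_ne_zero_iff {E : Multiset (Fin n × Fin n)} {a : Fin n} :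
    hdeg E a ≠ 0 ↔ ∃ b, (a, b) ∈ E := by
  simp [hdeg]

theorem altPartition_zero : AltPartition (0 : Multiset (Fin n × Fin n)) :=
  ⟨0, Fin.elim0, by simp⟩

theorem AltPartition.cycle_add {E : Multiset (Fin n × Fin n)} (hE : AltPartition E)
    (C : AltCycle n) : AltPartition (C.edges + E) := by
  obtain ⟨k, Cs, rfl⟩ := hE
  exact ⟨k + 1, Fin.cons C Cs, by simp [Fin.sum_univ_succ]⟩

structure AltWalk (n : ℕ) where
  m : ℕ
  w : ℕ → Fin n
  up : ∀ j < m, w (2 * j) < w (2 * j + 1)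
  down : ∀ j < m, w (2 * j + 2) < w (2 * j + 1)

namespace AltWalk

def edges (W : AltWalk n) : Multiset (Fin n × Fin n) :=
  (Multiset.range W.m).map (fun j => (W.w (2 * j), W.w (2 * j + 1))) +
    (Multiset.range W.m).map (fun j => (W.w (2 * j + 2), W.w (2 * j + 1)))

def nil (a : Fin n) : AltWalk n :=
  ⟨0, fun _ => a, fun _ h => absurd h (Nat.not_lt_zero _), fun _ h => absurd h (Nat.not_lt_zero _)⟩

@[simp]
theorem edges_nil (a : Fin n) : (nil a).edges = 0 := rfl

def cons (a b : Fin n) (W : AltWalk n) (hab : a < b) (hb : W.w 0 < b) : AltWalk n where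
  m := W.m + 1
  w k := match k with
    | 0 => a
    | 1 => b
    | k + 2 => W.w k
  up j hj := match j with
    | 0 => hab
    | j + 1 => W.up j (by omega)
  down j hj := match j with
    | 0 => hb
    | j + 1 => W.down j (by omega)

theorem edges_cons (a b : Fin n) (W : AltWalk n) (hab : a < b) (hb : W.w 0 < b) :
    (cons a b W hab hb).edges = (a, b) ::ₘ (W.w 0, b) ::ₘ W.edges := by
  simp only [edges, cons, Multiset.map_range_succ, Multiset.cons_add, Multiset.add_cons,
    Multiset.cons_swap (W.w _, b)]
  rfl

/-- A closed alternating walk is empty or an alternating cycle. -/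
theorem altPartition_edges_add (W : AltWalk n) (hW : W.w (2 * W.m) = W.w 0)
    {F : Multiset (Fin n × Fin n)} (hF : AltPartition F) : AltPartition (W.edges + F) := by
  rcases Nat.eq_zero_or_pos W.m with hm | hm
  · simpa [edges, hm] using hF
  · exact hF.cycle_add ⟨W.m, hm, W.w, hW, W.up, W.down⟩

end AltWalk

theorem exists_eq_cons_cons {E : Multiset (Fin n × Fin n)} (hlt : ∀ e ∈ E, e.1 < e.2)
    (hl : ∀ v, Even (ldeg E v)) {a : Fin n} (ha : hdeg E a ≠ 0) :
    ∃ b d E', a < b ∧ d < b ∧ E = (a, b) ::ₘ (d, b) ::ₘ E' := by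
  obtain ⟨b, hab⟩ := hdeg_ne_zero_iff.mp ha
  have hE := (Multiset.cons_erase hab).symm
  have hb : ldeg (E.erase (a, b)) b ≠ 0 := by
    intro h0
    have := hl b
    rw [hE, ldeg_cons, h0] at this
    simp at this
  obtain ⟨d, hdb⟩ := ldeg_ne_zero_iff.mp hb
  rw [← Multiset.cons_erase hdb] at hE
  exact ⟨b, d, _, hlt _ hab, hlt _ (Multiset.mem_of_mem_erase hdb), hE⟩

theorem exists_altWalk_add_altPartition (E : Multiset (Fin n × Fin n))
    (hlt : ∀ e ∈ E, e.1 < e.2) (hl : ∀ v, Even (ldeg E v)) (a c : Fin n)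
    (hh : ∀ v, Even (hdeg E v + (if a = v then 1 else 0) + (if c = v then 1 else 0))) :
    ∃ W : AltWalk n, W.w 0 = a ∧ W.w (2 * W.m) = c ∧
      ∃ F, AltPartition F ∧ E = W.edges + F := by
  induction E using Multiset.strongInductionOn generalizing a c with
  | ih E ih =>
  have peel : ∀ x, hdeg E x ≠ 0 → ∃ b d E', x < b ∧ d < b ∧ E = (x, b) ::ₘ (d, b) ::ₘ E' ∧
      E' < E ∧ (∀ e ∈ E', e.1 < e.2) ∧ (∀ v, Even (ldeg E' v)) := by
    intro x hx
    obtain ⟨b, d, E', hxb, hdb, rfl⟩ := exists_eq_cons_cons hlt hl hx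
    refine ⟨b, d, E', hxb, hdb, rfl, ?_, fun e he => hlt e (by simp [he]), fun v => ?_⟩
    · exact (Multiset.lt_cons_self _ _).trans (Multiset.lt_cons_self _ _)
    · have := hl v
      simp only [ldeg_cons] at this
      split_ifs at this <;> simpa [Nat.even_add_one] using this
  by_cases hac : a = c
  · subst hac
    rcases E.empty_or_exists_mem with rfl | ⟨⟨x, y⟩, hxy⟩
    · exact ⟨AltWalk.nil a, rfl, rfl, 0, altPartition_zero, rfl⟩
    obtain ⟨b, d, E', hxb, hdb, rfl, hE', hlt', hl'⟩ := peel x (hdeg_ne_zero_iff.mpr ⟨y, hxy⟩)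
    have hh' : ∀ v, Even (hdeg E' v + (if d = v then 1 else 0) + (if x = v then 1 else 0)) := by
      intro v
      have := hh v
      simp only [hdeg_cons] at this
      split_ifs at this ⊢ <;> simp_all [Nat.even_add_one]
    obtain ⟨W, hW0, hWm, F, hF, rfl⟩ := ih E' hE' hlt' hl' d x hh'
    let C := AltWalk.cons x b W hxb (hW0 ▸ hdb)
    refine ⟨AltWalk.nil a, rfl, rfl, C.edges + F, C.altPartition_edges_add hWm hF, ?_⟩
    simp [C, AltWalk.edges_cons, hW0]
  · have ha : hdeg E a ≠ 0 := by
      intro h0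
      have := hh a
      rw [h0, if_pos rfl, if_neg (Ne.symm hac)] at this
      simp at this
    obtain ⟨b, d, E', hab, hdb, rfl, hE', hlt', hl'⟩ := peel a ha
    have hh' : ∀ v, Even (hdeg E' v + (if d = v then 1 else 0) + (if c = v then 1 else 0)) := by
      intro v
      have := hh v
      simp only [hdeg_cons] at this
      split_ifs at this ⊢ <;> simp_all [Nat.even_add_one]
    obtain ⟨W, hW0, hWm, F, hF, rfl⟩ := ih E' hE' hlt' hl' d c hh'
    refine ⟨AltWalk.cons a b W hab (hW0 ▸ hdb), rfl, hWm, F, hF, ?_⟩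
    simp [AltWalk.edges_cons, hW0]

theorem altPartition_of_even_degrees (E : Multiset (Fin n × Fin n))
    (hlt : ∀ e ∈ E, e.1 < e.2) (hev : ∀ v, Even (ldeg E v) ∧ Even (hdeg E v)) :
    AltPartition E := by
  rcases E.empty_or_exists_mem with rfl | ⟨⟨a, _⟩, -⟩
  · exact altPartition_zero
  have hh : ∀ v, Even (hdeg E v + (if a = v then 1 else 0) + (if a = v then 1 else 0)) :=
    fun v => by rw [add_assoc]; exact (hev v).2.add (Even.add_self _)
  obtain ⟨W, hW0, hWm, F, hF, rfl⟩ :=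
    exists_altWalk_add_altPartition E hlt (fun v => (hev v).1) a a hh
  exact W.altPartition_edges_add (hWm.trans hW0.symm) hF

end AltWalks
/-- If two vertical graphs on the same vertex set have equal `ldeg`
and equal `hdeg` at every vertex, then their disjoint union has all `ldeg` and
`hdeg` even, and hence can be partitioned into alternating cycles — the pair is a
colliding pair. -/
theorem equal_degrees_colliding_pair {n : ℕ} (E1 E2 : Finset (Fin n × Fin n))
    (h1 : ∀ e ∈ E1, e.1 < e.2) (h2 : ∀ e ∈ E2, e.1 < e.2)
    (hdegs : ∀ v : Fin n, ldeg E1.val v = ldeg E2.val v ∧ hdeg E1.val v = hdeg E2.val v) :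
    (∀ v : Fin n, Even (ldeg (E1.val + E2.val) v) ∧ Even (hdeg (E1.val + E2.val) v)) ∧
      AltPartition (E1.val + E2.val) := by
  have heven : ∀ v, Even (ldeg (E1.val + E2.val) v) ∧ Even (hdeg (E1.val + E2.val) v) := by
    intro v
    rw [ldeg_add, hdeg_add, (hdegs v).1, (hdegs v).2]
    exact ⟨Even.add_self _, Even.add_self _⟩
  refine ⟨heven, altPartition_of_even_degrees _ (fun e he => ?_) heven⟩
  rcases Multiset.mem_add.mp he with he | he
  exacts [h1 e he, h2 e he]
end
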